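/- (Single-layer translation lemma.) Let C, A ∈ ℤ^{d×d} and b ∈ ℤ^d, and let φ_1,…,φ_d be K^# formulas that represent a state x_t, meaning that for every labeled graph G and every vertex v, the i-th component of x_t(v) equals 1 if (G,v) satisfies φ_i and 0 otherwise. Define, for ℓ=1,…,d, the formula φ'_ℓ := (Σ_{i=1}^d C_{iℓ}·1_{φ_i} + Σ_{i=1}^d A_{iℓ}·#φ_i + b_ℓ ≥ 1). Then the formulas φ'_1,…,φ'_d represent the state x_{t+1} defined by x_{t+1}(v)=σ(x_t(v)·C + (Σ_{(v,w)∈E} x_t(w))·A + b); that is, for every labeled graph G and vertex v, the ℓ-th component of x_{t+1}(v) equals 1 if (G,v) satisfies φ'_ℓ and 0 otherwise. -/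
import Mathlib


open scoped Classical

/-- A finite labeled directed graph: edges and a valuation of atomic
propositions (indexed by `ℕ`) at each vertex. -/
structure LGraph (V : Type) [Fintype V] where
  edge : V → V → Bool
  label : V → ℕ → Bool

mutual
/-- Formulas of the logic `K^#`. -/
inductive KForm : Type where
  | atom : ℕ → KForm
  | not : KForm → KForm
  | or : KForm → KForm → KForm
  | ge0 : KExpr → KForm
/-- Expressions of the logic `K^#`. -/
inductive KExpr : Type where
  | const : ℤ → KExpr
  | ind : KForm → KExpr
  | count : KForm → KExpr
  | add : KExpr → KExpr → KExpr
  | scale : ℤ → KExpr → KExpr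
end

mutual
/-- Truth of a `K^#` formula at a pointed graph. -/
def KForm.sat {V : Type} [Fintype V] (G : LGraph V) (u : V) : KForm → Bool
  | .atom p => G.label u p
  | .not φ => !(KForm.sat G u φ)
  | .or φ ψ => KForm.sat G u φ || KForm.sat G u ψ
  | .ge0 E => decide (0 ≤ KExpr.val G u E)
/-- Value of a `K^#` expression at a pointed graph. -/
def KExpr.val {V : Type} [Fintype V] (G : LGraph V) (u : V) : KExpr → ℤ
  | .const c => c
  | .ind φ => if KForm.sat G u φ then 1 else 0
  | .count φ =>
      ((Finset.univ.filter (fun v => G.edge u v = true ∧ KForm.sat G v φ = true)).card : ℤ)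
  | .add E₁ E₂ => KExpr.val G u E₁ + KExpr.val G u E₂
  | .scale c E => c * KExpr.val G u E
end

/-- The clipped (truncated) ReLU `σ(x) = min(max(0,x),1)`. -/
def clip (x : ℝ) : ℝ := min (max 0 x) 1

/-- The `K^#` expression `Σ_{i<n} f i`. -/
def KExpr.sumF {n : ℕ} (f : Fin n → KExpr) : KExpr :=
  (List.finRange n).foldr (fun i E => KExpr.add (f i) E) (KExpr.const 0)

/-- The formula `φ'_ℓ := (Σ_i C_{iℓ}·1_{φ_i} + Σ_i A_{iℓ}·#φ_i + b_ℓ ≥ 1)`,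
written in `K^#` as `Σ_i C_{iℓ}·1_{φ_i} + Σ_i A_{iℓ}·#φ_i + (b_ℓ - 1) ≥ 0`. -/
def layerFormula {d : ℕ} (C A : Matrix (Fin d) (Fin d) ℤ) (b : Fin d → ℤ)
    (φs : Fin d → KForm) (l : Fin d) : KForm :=
  KForm.ge0
    (KExpr.add
      (KExpr.add (KExpr.sumF (fun i => KExpr.scale (C i l) (KExpr.ind (φs i))))
        (KExpr.sumF (fun i => KExpr.scale (A i l) (KExpr.count (φs i)))))
      (KExpr.const (b l - 1)))


lemma val_sumF {V : Type} [Fintype V] (G : LGraph V) (u : V) {n : ℕ} (f : Fin n → KExpr) :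
    KExpr.val G u (KExpr.sumF f) = ∑ i, KExpr.val G u (f i) := by
  have h : ∀ L : List (Fin n),
      KExpr.val G u (L.foldr (fun i E => KExpr.add (f i) E) (KExpr.const 0))
        = (L.map (fun i => KExpr.val G u (f i))).sum := by
    intro L
    induction L with
    | nil => simp [KExpr.val]
    | cons a L ih => simp [KExpr.val, ih]
  rw [KExpr.sumF, h, Fin.sum_univ_def]

/-- Single-layer translation lemma: if the formulas `φs i` represent the state `x`
(on every labeled graph), then the formulas `φ'_ℓ` represent the next state
`x_{t+1}(v) = σ(x_t(v)·C + (Σ_{(v,w)∈E} x_t(w))·A + b)`. -/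
theorem single_layer_translation (d : ℕ) (C A : Matrix (Fin d) (Fin d) ℤ)
    (b : Fin d → ℤ) (φs : Fin d → KForm)
    (x : (V : Type) → [Fintype V] → LGraph V → V → Fin d → ℝ)
    (hrep : ∀ (V : Type) [Fintype V] (G : LGraph V) (v : V) (i : Fin d),
      x V G v i = if KForm.sat G v (φs i) = true then 1 else 0) :
    ∀ (V : Type) [Fintype V] (G : LGraph V) (v : V) (l : Fin d),
      clip ((∑ i, x V G v i * (C i l : ℝ))
          + (∑ i, (∑ w ∈ Finset.univ.filter (fun w => G.edge v w = true), x V G w i)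
              * (A i l : ℝ))
          + (b l : ℝ))
        = if KForm.sat G v (layerFormula C A b φs l) = true then 1 else 0 := by
  intro V _ G v l
  set N : ℤ := (∑ i, C i l * (if KForm.sat G v (φs i) = true then 1 else 0))
      + (∑ i, A i l * ((Finset.univ.filter
          (fun w => G.edge v w = true ∧ KForm.sat G w (φs i) = true)).card : ℤ))
      + b l with hN
  have hval : KExpr.val G v (KExpr.add
      (KExpr.add (KExpr.sumF (fun i => KExpr.scale (C i l) (KExpr.ind (φs i))))
        (KExpr.sumF (fun i => KExpr.scale (A i l) (KExpr.count (φs i)))))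
      (KExpr.const (b l - 1))) = N - 1 := by
    simp only [KExpr.val, val_sumF, hN]
    ring
  have harg : ((∑ i, x V G v i * (C i l : ℝ))
          + (∑ i, (∑ w ∈ Finset.univ.filter (fun w => G.edge v w = true), x V G w i)
              * (A i l : ℝ))
          + (b l : ℝ)) = (N : ℝ) := by
    have h1 : ∀ i : Fin d, x V G v i * (C i l : ℝ)
        = ((C i l * (if KForm.sat G v (φs i) = true then 1 else 0) : ℤ) : ℝ) := by
      intro i; rw [hrep]; push_cast; split <;> ring
    have h2 : ∀ i : Fin d,
        (∑ w ∈ Finset.univ.filter (fun w => G.edge v w = true), x V G w i)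
        = ((Finset.univ.filter
            (fun w => G.edge v w = true ∧ KForm.sat G w (φs i) = true)).card : ℝ) := by
      intro i
      rw [← Finset.filter_filter]
      rw [Finset.sum_congr rfl (fun w _ => hrep V G w i)]
      simp [Finset.sum_boole]
    have e2 : (∑ i, (∑ w ∈ Finset.univ.filter (fun w => G.edge v w = true), x V G w i)
              * (A i l : ℝ))
        = ∑ i, ((A i l * ((Finset.univ.filter
            (fun w => G.edge v w = true ∧ KForm.sat G w (φs i) = true)).card : ℤ) : ℤ) : ℝ) :=
      Finset.sum_congr rfl fun i _ => by rw [h2 i]; push_cast; ring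
    simp only [h1]
    rw [e2, hN]
    push_cast
    ring
  rw [harg]
  have hsat : KForm.sat G v (layerFormula C A b φs l) = decide (0 ≤ N - 1) := by
    rw [layerFormula]
    simp only [KForm.sat, hval]
  rw [hsat]
  rcases le_or_gt 1 N with h | h
  · have : (decide (0 ≤ N - 1)) = true := by simp; omega
    rw [this]
    simp only [if_true, clip]
    have h0 : (1:ℝ) ≤ (N:ℝ) := by exact_mod_cast h
    rw [max_eq_right (le_trans zero_le_one h0), min_eq_right h0]
  · have : (decide (0 ≤ N - 1)) = false := by simp; omega
    rw [this]
    have hle : N ≤ 0 := by omega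
    have h0 : (N:ℝ) ≤ 0 := by exact_mod_cast hle
    simp only [Bool.false_eq_true, if_false, clip]
    rw [max_eq_left h0, min_eq_left zero_le_one]
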